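/- arXiv:1508.05293 — 5 statements merged into one kernel-verified Lean document; each statement's English description precedes it below -/
import Mathlib

section
/- For positive integers n and b with gcd(n+1, b) = 1, the identity sum_{i=1}^{b-1} ((b-i)/2) * floor(i(n+1)/b) * (1 + floor(i(n+1)/b)) = n(b^2-1)(n+2)/24 holds. -/
/-!
Put `m = n + 1`, `q i = ⌊i m / b⌋` and `r i = i m mod b`. Since `r i ≠ 0`, reflection gives
`q (b - i) = m - 1 - q i`, so pairing the terms `i` and `b - i` and substituting `b q i = i m - r i`
removes `q` altogether: each pair contributes `(m² g i - g (r i)) / 2` with `g x = x - x² / b`.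
As `i ↦ r i` permutes `{1, …, b - 1}`, the sum is `(m² - 1) / 4 · ∑ g i = (m² - 1)(b² - 1) / 24`.
-/

open Finset

lemma mul_mod_mem_Icc_of_coprime {m b i : ℕ} (h : m.Coprime b) (hi : i ∈ Icc 1 (b - 1)) :
    i * m % b ∈ Icc 1 (b - 1) := by
  rw [mem_Icc] at hi ⊢
  have hne : i * m % b ≠ 0 := fun hdvd => by
    have := Nat.le_of_dvd (by omega)
      (h.symm.dvd_of_dvd_mul_right (Nat.dvd_of_mod_eq_zero hdvd))
    omega
  have := Nat.mod_lt (i * m) (show 0 < b by omega)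
  omega

lemma injOn_mul_mod_of_coprime {m b : ℕ} (h : m.Coprime b) :
    Set.InjOn (· * m % b) (Icc 1 (b - 1) : Set ℕ) := by
  intro x hx y hy hxy
  have hxy : x ≡ y [MOD b] := Nat.ModEq.cancel_right_of_coprime (Nat.coprime_comm.mp h) hxy
  simp only [coe_Icc, Set.mem_Icc] at hx hy
  rwa [Nat.ModEq, Nat.mod_eq_of_lt (by omega), Nat.mod_eq_of_lt (by omega)] at hxy

lemma sum_Icc_mul_mod_of_coprime {M : Type*} [AddCommMonoid M] {m b : ℕ} (h : m.Coprime b)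
    (f : ℕ → M) : ∑ i ∈ Icc 1 (b - 1), f (i * m % b) = ∑ i ∈ Icc 1 (b - 1), f i := by
  have maps : Set.MapsTo (· * m % b) (Icc 1 (b - 1) : Set ℕ) (Icc 1 (b - 1)) :=
    fun _ hi => mul_mod_mem_Icc_of_coprime h hi
  exact sum_nbij _ maps (injOn_mul_mod_of_coprime h)
    (surjOn_of_injOn_of_card_le _ maps (injOn_mul_mod_of_coprime h) le_rfl) fun _ _ => rfl

lemma sum_Icc_sub_reflect {M : Type*} [AddCommMonoid M] (b : ℕ) (f : ℕ → M) :
    ∑ i ∈ Icc 1 (b - 1), f (b - i) = ∑ i ∈ Icc 1 (b - 1), f i :=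
  sum_nbij' (b - ·) (b - ·) (by simp only [mem_Icc]; omega) (by simp only [mem_Icc]; omega)
    (by simp only [mem_Icc]; omega) (by simp only [mem_Icc]; omega) fun _ _ => rfl

lemma sub_mul_div_add_mul_div_add_one {m b i : ℕ} (hi : i < b) (hr : i * m % b ≠ 0) :
    (b - i) * m / b + i * m / b + 1 = m := by
  have hm : 0 < m := Nat.pos_of_ne_zero (by rintro rfl; simp at hr)
  have hdm := Nat.div_add_mod (i * m) b
  have hr_lt := Nat.mod_lt (i * m) (show 0 < b by omega)
  have hq : i * m / b < m := (Nat.div_lt_iff_lt_mul (by omega)).2 (by nlinarith)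
  suffices (b - i) * m / b = m - 1 - i * m / b by omega
  set q := i * m / b
  set r := i * m % b
  have hr_pos : 0 < r := Nat.pos_of_ne_zero hr
  apply Nat.div_eq_of_lt_le <;>
  · zify [hi.le, hq.le, show q ≤ m - 1 by omega, hm] at hdm hr_lt hr_pos ⊢
    linarith

lemma sum_range_cast_mul_two {R : Type*} [CommRing R] (n : ℕ) :
    (∑ i ∈ range n, (i : R)) * 2 = n * (n - 1) := by
  induction n with
  | zero => simp
  | succ n ih => rw [sum_range_succ, add_mul, ih]; push_cast; ring

lemma sum_range_cast_sq_mul_six {R : Type*} [CommRing R] (n : ℕ) :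
    (∑ i ∈ range n, (i : R) ^ 2) * 6 = n * (n - 1) * (2 * n - 1) := by
  induction n with
  | zero => simp
  | succ n ih => rw [sum_range_succ, add_mul, ih]; push_cast; ring

lemma sum_Icc_sub_sq_div {K : Type*} [Field K] [CharZero K] {b : ℕ} (hb : b ≠ 0) :
    ∑ i ∈ Icc 1 (b - 1), ((i : K) - i ^ 2 / b) = ((b : K) ^ 2 - 1) / 6 := by
  have hsub : ∑ i ∈ Icc 1 (b - 1), ((i : K) - i ^ 2 / b)
      = ∑ i ∈ range b, ((i : K) - i ^ 2 / b) :=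
    sum_subset (fun i => by simp only [mem_Icc, mem_range]; omega) fun i hib hi => by
      obtain rfl : i = 0 := by simp only [mem_Icc, mem_range] at hib hi; omega
      simp
  rw [hsub, sum_sub_distrib, ← sum_div]
  have hbK : (b : K) ≠ 0 := Nat.cast_ne_zero.2 hb
  field_simp
  linear_combination (3 * b) * sum_range_cast_mul_two (R := K) b - sum_range_cast_sq_mul_six (R := K) b

lemma quotient_pair_identity {K : Type*} [Field K] {b i m q q' r : K} (hb : b ≠ 0)
    (hdiv : b * q + r = i * m) (hrefl : q' + q + 1 = m) :
    (b - i) * q * (1 + q) + i * q' * (1 + q') = m ^ 2 * (i - i ^ 2 / b) - (r - r ^ 2 / b) := by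
  obtain rfl : q' = m - 1 - q := by linear_combination hrefl
  field_simp
  linear_combination (b * q - i * m - r + b) * hdiv

lemma reflect_pair_eq_of_coprime {K : Type*} [Field K] [CharZero K] {m b i : ℕ}
    (h : m.Coprime b) (hi : i ∈ Icc 1 (b - 1)) :
    ((b : K) - i) * (i * m / b : ℕ) * (1 + (i * m / b : ℕ))
        + ((b : K) - (b - i : ℕ)) * ((b - i) * m / b : ℕ) * (1 + ((b - i) * m / b : ℕ))
      = (m : K) ^ 2 * (i - i ^ 2 / b) - ((i * m % b : ℕ) - (i * m % b : ℕ) ^ 2 / b) := by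
  have hib : i < b := by rw [mem_Icc] at hi; omega
  have hdiv : b * (i * m / b) + i * m % b = i * m := Nat.div_add_mod _ _
  have hrefl := sub_mul_div_add_mul_div_add_one hib
    (Nat.one_le_iff_ne_zero.mp (mem_Icc.mp (mul_mod_mem_Icc_of_coprime h hi)).1)
  rw [Nat.cast_sub hib.le, sub_sub_cancel]
  exact quotient_pair_identity (Nat.cast_ne_zero.2 (by omega))
    (by exact_mod_cast hdiv) (by exact_mod_cast hrefl)

theorem floor_sum_identity_typeA_general (n b : ℕ) (hb : 0 < b)
    (h : Nat.Coprime (n + 1) b) :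
    ∑ i ∈ Finset.Icc 1 (b - 1),
        ((b : ℚ) - i) / 2 * ((i * (n + 1) / b : ℕ) : ℚ) * (1 + ((i * (n + 1) / b : ℕ) : ℚ))
      = (n : ℚ) * ((b : ℚ) ^ 2 - 1) * ((n : ℚ) + 2) / 24 := by
  set T : ℕ → ℚ := fun i =>
    ((b : ℚ) - i) / 2 * ((i * (n + 1) / b : ℕ) : ℚ) * (1 + ((i * (n + 1) / b : ℕ) : ℚ))
  set g : ℕ → ℚ := fun x => (x : ℚ) - x ^ 2 / b
  have hpair : ∀ i ∈ Icc 1 (b - 1),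
      T i + T (b - i) = (((n : ℚ) + 1) ^ 2 * g i - g (i * (n + 1) % b)) / 2 := by
    intro i hi
    have key := reflect_pair_eq_of_coprime (K := ℚ) h hi
    push_cast at key
    linear_combination key / 2
  calc ∑ i ∈ Icc 1 (b - 1), T i
      = (∑ i ∈ Icc 1 (b - 1), T i + ∑ i ∈ Icc 1 (b - 1), T (b - i)) / 2 := by
        rw [sum_Icc_sub_reflect]; ring
    _ = (∑ i ∈ Icc 1 (b - 1), (((n : ℚ) + 1) ^ 2 * g i - g (i * (n + 1) % b))) / 4 := by
        rw [← sum_add_distrib, sum_congr rfl hpair, ← sum_div]; ring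
    _ = (((n : ℚ) + 1) ^ 2 - 1) / 4 * ∑ i ∈ Icc 1 (b - 1), g i := by
        rw [sum_sub_distrib, sum_Icc_mul_mod_of_coprime h, ← mul_sum]; ring
    _ = (n : ℚ) * ((b : ℚ) ^ 2 - 1) * ((n : ℚ) + 2) / 24 := by
        rw [sum_Icc_sub_sq_div hb.ne']; ring

/-- Floor-sum identity in type `A_n`:
`∑_{i=1}^{b-1} ((b-i)/2) ⌊i(n+1)/b⌋ (1+⌊i(n+1)/b⌋) = n(b²-1)(n+2)/24`. -/
theorem floor_sum_identity_typeA (n b : ℕ) (hn : 0 < n) (hb : 0 < b)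
    (h : Nat.Coprime (n + 1) b) :
    ∑ i ∈ Finset.Icc 1 (b - 1),
        ((b : ℚ) - i) / 2 * ((i * (n + 1) / b : ℕ) : ℚ) * (1 + ((i * (n + 1) / b : ℕ) : ℚ))
      = (n : ℚ) * ((b : ℚ) ^ 2 - 1) * ((n : ℚ) + 2) / 24 :=
  floor_sum_identity_typeA_general n b hb h
end

section
/- For every odd positive integer n, (n+1) * ( (1/2)*(1/8)^2 + sum_{i=1}^{(n+1)/2} ((4i^2 - 1)/8)^2 ) = (3n^2 + 12n + 4)(n+4)(n+2)(n+1)n / 1920. -/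
theorem half_sq_add_sum_Icc_sq_four_mul_sq_sub_one_div_eight (m : ℕ) :
    (1 / 2) * (1 / 8) ^ 2 + ∑ i ∈ Finset.Icc 1 m, ((4 * (i : ℚ) ^ 2 - 1) / 8) ^ 2
      = (2 * (m : ℚ) - 1) * (2 * m + 1) * (2 * m + 3) * (12 * (m : ℚ) ^ 2 + 12 * m - 5)
          / 1920 := by
  induction m with
  | zero => norm_num
  | succ m ih =>
    rw [Finset.sum_Icc_succ_top (Nat.le_add_left 1 m), ← add_assoc, ih]
    push_cast
    ring

/-- For odd `n`:
`(n+1)((1/2)(1/8)² + ∑_{i=1}^{(n+1)/2} ((4i²-1)/8)²) = (3n²+12n+4)(n+4)(n+2)(n+1)n/1920`. -/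
theorem sum_sq_zise_odd (n : ℕ) (hn : Odd n) :
    ((n : ℚ) + 1) *
        ((1 / 2) * (1 / 8) ^ 2
          + ∑ i ∈ Finset.Icc 1 ((n + 1) / 2), ((4 * (i : ℚ) ^ 2 - 1) / 8) ^ 2)
      = (3 * (n : ℚ) ^ 2 + 12 * n + 4) * ((n : ℚ) + 4) * ((n : ℚ) + 2) * ((n : ℚ) + 1) * n
          / 1920 := by
  obtain ⟨k, rfl⟩ := hn
  rw [show (2 * k + 1 + 1) / 2 = k + 1 by omega,
    half_sq_add_sum_Icc_sq_four_mul_sq_sub_one_div_eight]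
  push_cast
  ring
end

section
/- For every integer n >= 2 with n not congruent to 1 mod 3, sum_{i=0}^{n-2-floor((n-1)/3)} 4*pent(i) + 8*pent(n-1-floor((n-1)/3)) + sum_{i=n-floor((n-1)/3)}^{2n-2-2*floor((n-1)/3)} 4 * ((1 + (-1)^(i-n+floor((n-1)/3)))/2) * pent(i) = 4*n*(n+1)*(n+2)/6, where pent(i) = (1/2)*(3*floor((i+1)/2)^2 + (-1)^i * floor((i+1)/2)). -/
/-!
Writing `n = 3k` or `n = 3k + 2`, every piece of the left-hand side is a sum of generalized
pentagonal numbers over a run of consecutive indices, or over every other index of such a run.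
On even and odd indices `pent` is a quadratic polynomial, `pent (2j) = j(3j+1)/2` and
`pent (2j+1) = (j+1)(3j+2)/2`, and two consecutive values add up to `(j+1)³ - j³`; so each piece
has a cubic closed form, and the identity becomes a polynomial identity in `k`.
-/

/-- The `i`-th generalized pentagonal number
`pent i = (1/2)(3⌊(i+1)/2⌋² + (-1)^i ⌊(i+1)/2⌋)`. -/
def pent (i : ℕ) : ℚ :=
  (1 / 2) * (3 * (((i + 1) / 2 : ℕ) : ℚ) ^ 2 + (-1) ^ i * (((i + 1) / 2 : ℕ) : ℚ))

open Finset

theorem sum_range_mul_one_add_neg_one_pow_div_two {K : Type*} [DivisionRing K] [NeZero (2 : K)]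
    (f : ℕ → K) (N : ℕ) :
    ∑ t ∈ range N, (1 + (-1 : K) ^ t) / 2 * f t = ∑ j ∈ range ((N + 1) / 2), f (2 * j) := by
  induction N using Nat.twoStepInduction with
  | zero => simp
  | one => simp
  | more N ih _ =>
    have hidx : (N + 2 + 1) / 2 = (N + 1) / 2 + 1 := by omega
    rw [sum_range_succ, sum_range_succ, ih, hidx, sum_range_succ, add_assoc]
    congr 1
    obtain ⟨r, rfl | rfl⟩ := Nat.even_or_odd' N
    · have hr : (2 * r + 1) / 2 = r := by omega
      simp [pow_succ, pow_mul, hr]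
    · have hr : (2 * r + 1 + 1) / 2 = r + 1 := by omega
      simp [pow_succ, pow_mul, hr, mul_add]

theorem sum_Icc_mul_one_add_neg_one_pow_div_two {K : Type*} [DivisionRing K] [NeZero (2 : K)]
    (f : ℕ → K) (a b : ℕ) :
    ∑ i ∈ Icc a b, (1 + (-1 : K) ^ (i - a)) / 2 * f i
      = ∑ j ∈ range ((b + 2 - a) / 2), f (a + 2 * j) := by
  have hlen : (b + 1 - a + 1) / 2 = (b + 2 - a) / 2 := by omega
  rw [← Ico_add_one_right_eq_Icc, sum_Ico_eq_sum_range]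
  simp only [Nat.add_sub_cancel_left]
  rw [sum_range_mul_one_add_neg_one_pow_div_two (fun t => f (a + t)), hlen]

theorem pent_two_mul (j : ℕ) : pent (2 * j) = j * (3 * j + 1) / 2 := by
  have hidx : (2 * j + 1) / 2 = j := by omega
  simp only [pent, hidx, pow_mul, neg_one_sq, one_pow]
  ring

theorem pent_two_mul_add_one (j : ℕ) : pent (2 * j + 1) = (j + 1) * (3 * j + 2) / 2 := by
  have hidx : (2 * j + 1 + 1) / 2 = j + 1 := by omega
  simp only [pent, hidx, pow_succ, pow_mul]
  push_cast
  ring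

theorem sum_range_two_mul_pent (k : ℕ) : ∑ i ∈ range (2 * k), pent i = (k : ℚ) ^ 3 := by
  induction k with
  | zero => simp
  | succ k ih =>
    rw [mul_add_one, sum_range_succ, sum_range_succ, ih, pent_two_mul, pent_two_mul_add_one]
    push_cast
    ring

theorem sum_range_pent_two_mul_add_two_mul (m l : ℕ) :
    ∑ j ∈ range l, pent (2 * m + 2 * j)
      = (((m + l : ℚ)) ^ 2 * (m + l - 1) - (m : ℚ) ^ 2 * (m - 1)) / 2 := by
  induction l with
  | zero => simp
  | succ l ih =>
    rw [sum_range_succ, ih, ← mul_add, pent_two_mul]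
    push_cast
    ring

theorem sum_range_pent_two_mul_add_one_add_two_mul (m l : ℕ) :
    ∑ j ∈ range l, pent (2 * m + 1 + 2 * j)
      = (((m + l : ℚ)) ^ 2 * (m + l + 1) - (m : ℚ) ^ 2 * (m + 1)) / 2 := by
  induction l with
  | zero => simp
  | succ l ih =>
    rw [sum_range_succ, ih, show 2 * m + 1 + 2 * l = 2 * (m + l) + 1 by ring,
      pent_two_mul_add_one]
    push_cast
    ring

/-- Pentagonal-number identity for the 3-fold dilated alcove of affine `D_n`,
`n ≢ 1 (mod 3)`. -/
theorem pent_sum_identity_typeD (n : ℕ) (hn : 2 ≤ n) (h3 : n % 3 ≠ 1) :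
    (∑ i ∈ Finset.range (n - 2 - (n - 1) / 3 + 1), 4 * pent i)
      + 8 * pent (n - 1 - (n - 1) / 3)
      + ∑ i ∈ Finset.Icc (n - (n - 1) / 3) (2 * n - 2 - 2 * ((n - 1) / 3)),
          4 * ((1 + (-1 : ℚ) ^ (i - (n - (n - 1) / 3))) / 2) * pent i
      = 4 * (n : ℚ) * ((n : ℚ) + 1) * ((n : ℚ) + 2) / 6 := by
  have hthird (a b : ℕ) : ∑ i ∈ Icc a b, 4 * ((1 + (-1 : ℚ) ^ (i - a)) / 2) * pent i
      = 4 * ∑ j ∈ range ((b + 2 - a) / 2), pent (a + 2 * j) := by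
    rw [← sum_Icc_mul_one_add_neg_one_pow_div_two, mul_sum]
    exact sum_congr rfl fun _ _ => by ring
  rw [hthird, ← mul_sum]
  obtain ⟨k, rfl | rfl⟩ : ∃ k, n = 3 * k ∨ n = 3 * k + 2 := ⟨n / 3, by omega⟩
  · have hfirst : 3 * k - 2 - (3 * k - 1) / 3 + 1 = 2 * k := by omega
    have hmid : 3 * k - 1 - (3 * k - 1) / 3 = 2 * k := by omega
    have hstart : 3 * k - (3 * k - 1) / 3 = 2 * k + 1 := by omega
    have hlen : (2 * (3 * k) - 2 - 2 * ((3 * k - 1) / 3) + 2 - (2 * k + 1)) / 2 = k := by omega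
    rw [hfirst, hmid, hstart, hlen, sum_range_two_mul_pent, pent_two_mul,
      sum_range_pent_two_mul_add_one_add_two_mul]
    push_cast
    ring
  · have hfirst : 3 * k + 2 - 2 - (3 * k + 2 - 1) / 3 + 1 = 2 * k + 1 := by omega
    have hmid : 3 * k + 2 - 1 - (3 * k + 2 - 1) / 3 = 2 * k + 1 := by omega
    have hstart : 3 * k + 2 - (3 * k + 2 - 1) / 3 = 2 * (k + 1) := by omega
    have hlen : (2 * (3 * k + 2) - 2 - 2 * ((3 * k + 2 - 1) / 3) + 2 - 2 * (k + 1)) / 2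
        = k + 1 := by omega
    rw [hfirst, hmid, hstart, hlen, sum_range_succ, sum_range_two_mul_pent, pent_two_mul,
      pent_two_mul_add_one, sum_range_pent_two_mul_add_two_mul]
    push_cast
    ring
end

section
/- For every integer n >= 4 with n congruent to 1 mod 3, sum_{i=0}^{(n-4)/3} 8*(3*binomial(i+1,2) + 1/3) + 12*(3*binomial((n-1)/3 + 1, 2) + 1/3) + sum_{i=(n+2)/3}^{(2n-2)/3} 4*(3*binomial(i+1,2) + 1/3) = 4*n*(n+1)*(n+2)/6. -/
/-!
Every summand is `3 * binomial(i+1,2) + 1/3`, whose partial sums have the closed form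
`(N-1)N(N+1)/2 + N/3` (hockey stick). Writing `n = 3j + 4`, the two sums are such partial sums
(the second one as a difference of two), so the identity becomes a polynomial identity in `j`.
-/

open Finset

section ZiseSum

variable {K : Type*} [Field K] [CharZero K]

theorem sum_range_three_mul_choose_two_add_third (N : ℕ) :
    ∑ i ∈ range N, (3 * (((i + 1).choose 2 : ℕ) : K) + 1 / 3)
      = ((N : K) - 1) * N * (N + 1) / 2 + N / 3 := by
  induction N with
  | zero => simp
  | succ N ih =>
    rw [sum_range_succ, ih, Nat.cast_choose_two]
    push_cast
    ring

theorem sum_Icc_three_mul_choose_two_add_third {a b : ℕ} (hab : a ≤ b + 1) :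
    ∑ i ∈ Icc a b, (3 * (((i + 1).choose 2 : ℕ) : K) + 1 / 3)
      = ((b : K) * (b + 1) * (b + 2) / 2 + (b + 1) / 3)
        - (((a : K) - 1) * a * (a + 1) / 2 + a / 3) := by
  rw [← Ico_add_one_right_eq_Icc, sum_Ico_eq_sub _ hab, sum_range_three_mul_choose_two_add_third,
    sum_range_three_mul_choose_two_add_third]
  push_cast
  ring

end ZiseSum

/-- Identity for the sum of `zise` over the 3-fold dilated alcove of affine `D_n`,
for `n ≡ 1 (mod 3)`, `n ≥ 4`. -/
theorem binom3_sum_identity_typeD (n : ℕ) (hn : 4 ≤ n) (h3 : n % 3 = 1) :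
    (∑ i ∈ Finset.range ((n - 4) / 3 + 1), 8 * (3 * (((i + 1).choose 2 : ℕ) : ℚ) + 1 / 3))
      + 12 * (3 * ((((n - 1) / 3 + 1).choose 2 : ℕ) : ℚ) + 1 / 3)
      + ∑ i ∈ Finset.Icc ((n + 2) / 3) ((2 * n - 2) / 3),
          4 * (3 * (((i + 1).choose 2 : ℕ) : ℚ) + 1 / 3)
      = 4 * (n : ℚ) * ((n : ℚ) + 1) * ((n : ℚ) + 2) / 6 := by
  obtain ⟨j, rfl⟩ : ∃ j, n = 3 * j + 4 := ⟨(n - 4) / 3, by omega⟩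
  rw [show (3 * j + 4 - 4) / 3 + 1 = j + 1 by omega, show (3 * j + 4 - 1) / 3 + 1 = j + 2 by omega,
    show (3 * j + 4 + 2) / 3 = j + 2 by omega, show (2 * (3 * j + 4) - 2) / 3 = 2 * j + 2 by omega,
    ← mul_sum, ← mul_sum, sum_range_three_mul_choose_two_add_third,
    sum_Icc_three_mul_choose_two_add_third (by omega), Nat.cast_choose_two]
  push_cast
  ring
end

section
/- Let a >= 2 and b be coprime. The number of (2, b)-cores (for b odd) equals (b+1)/2, and the sum of their sizes equals sum_{i=0}^{(b-1)/2} binomial(i+1, 2), which equals (b-1)(b+1)(b+3)/48. -/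
/-- The hook length of the cell `(i, j)` in a Young diagram. -/
def YoungDiagram.hookLength (μ : YoungDiagram) (i j : ℕ) : ℕ :=
  (μ.rowLen i - j) + (μ.colLen j - i) - 1

/-- A Young diagram is an `a`-core if none of its hook lengths is divisible by `a`. -/
def YoungDiagram.IsCore (μ : YoungDiagram) (a : ℕ) : Prop :=
  ∀ i j : ℕ, (i, j) ∈ μ → ¬ a ∣ μ.hookLength i j

/-!
If two rows `i`, `i + 1` of a 2-core had equal lengths, the last cells of these rows would have
consecutive hook lengths; if row `i` were longer by at least two, its last two cells would. One
of two consecutive numbers is even, so consecutive rows of a 2-core differ by exactly one cell and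
the 2-cores are the staircases `(k, k - 1, …, 1)`. The hook lengths of the staircase of height
`k` are the odd numbers `1, 3, …, 2k - 1`, so for odd `b` it is a `b`-core iff `2k ≤ b`, and its
size is `C(k + 1, 2)`.
-/

namespace YoungDiagram

open Finset

/-- The staircase `(k, k - 1, …, 1)`, whose `n`-th antidiagonal is full for `n < k`. -/
def staircase (k : ℕ) : YoungDiagram where
  cells := (range k).biUnion antidiagonal
  isLowerSet := by
    rintro ⟨i, j⟩ ⟨i', j'⟩ ⟨hi, hj⟩
    simp only [coe_biUnion, coe_range, Set.mem_iUnion, Set.mem_Iio, mem_coe,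
      HasAntidiagonal.mem_antidiagonal, exists_prop]
    rintro ⟨n, hn, rfl⟩
    exact ⟨i' + j', by omega, rfl⟩

theorem mem_staircase {k i j : ℕ} : (i, j) ∈ staircase k ↔ i + j < k := by
  simp [← mem_cells, staircase]

theorem rowLen_staircase (k i : ℕ) : (staircase k).rowLen i = k - i :=
  eq_of_forall_lt_iff fun j => by rw [← mem_iff_lt_rowLen, mem_staircase]; omega

theorem colLen_staircase (k j : ℕ) : (staircase k).colLen j = k - j :=
  eq_of_forall_lt_iff fun i => by rw [← mem_iff_lt_colLen, mem_staircase]; omega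

theorem hookLength_staircase {k i j : ℕ} (h : i + j < k) :
    (staircase k).hookLength i j = 2 * (k - (i + j)) - 1 := by
  rw [hookLength, rowLen_staircase, colLen_staircase]
  omega

theorem staircase_injective : Function.Injective staircase := fun k k' h => by
  simpa [rowLen_staircase] using congrArg (rowLen · 0) h

theorem card_staircase (k : ℕ) : (staircase k).card = (k + 1).choose 2 := by
  have hdisj : Set.PairwiseDisjoint ↑(range k) (antidiagonal : ℕ → Finset (ℕ × ℕ)) :=
    fun m _ n _ hmn => disjoint_left.2 fun p hm hn =>
      hmn (by rw [HasAntidiagonal.mem_antidiagonal] at hm hn; rw [← hm, hn])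
  rw [YoungDiagram.card, staircase, card_biUnion hdisj, Nat.choose_two_right, ← sum_range_id,
    sum_range_succ']
  simp [Nat.card_antidiagonal]

theorem staircase_isCore_two (k : ℕ) : (staircase k).IsCore 2 := by
  intro i j h
  have hij := mem_staircase.1 h
  rw [hookLength_staircase hij]
  omega

theorem staircase_isCore_iff {b : ℕ} (hb : Odd b) (k : ℕ) :
    (staircase k).IsCore b ↔ 2 * k ≤ b := by
  obtain ⟨c, rfl⟩ := hb
  constructor
  · intro hcore
    by_contra! hk
    have hmem : (0, k - (c + 1)) ∈ staircase k := mem_staircase.2 (by omega)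
    refine hcore _ _ hmem ⟨1, ?_⟩
    rw [hookLength_staircase (mem_staircase.1 hmem)]
    omega
  · intro hk i j h
    have hij := mem_staircase.1 h
    rw [hookLength_staircase hij]
    exact Nat.not_dvd_of_pos_of_lt (by omega) (by omega)

variable {μ : YoungDiagram} {i j : ℕ}

theorem hookLength_of_not_mem_right (h : (i, j) ∈ μ) (hr : (i, j + 1) ∉ μ) :
    μ.hookLength i j = μ.colLen j - i := by
  rw [mem_iff_lt_rowLen] at h hr
  rw [hookLength]
  omega

theorem hookLength_of_not_mem_below (h : (i, j) ∈ μ) (hb : (i + 1, j) ∉ μ) :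
    μ.hookLength i j = μ.rowLen i - j := by
  rw [mem_iff_lt_colLen] at h hb
  rw [hookLength]
  omega

theorem IsCore.hookLength_ne_add_one (hμ : μ.IsCore 2) {i' j' : ℕ} (h : (i, j) ∈ μ)
    (h' : (i', j') ∈ μ) : μ.hookLength i' j' ≠ μ.hookLength i j + 1 := by
  have := hμ i j h
  have := hμ i' j' h'
  omega

theorem IsCore.rowLen_succ_add_one (hμ : μ.IsCore 2) (hi : 0 < μ.rowLen i) :
    μ.rowLen (i + 1) + 1 = μ.rowLen i := by
  have hle := μ.rowLen_anti i (i + 1) i.le_succ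
  rcases Nat.lt_trichotomy (μ.rowLen (i + 1) + 1) (μ.rowLen i) with hlt | heq | hgt
  · set s := μ.rowLen (i + 1)
    have h₀ : (i, s) ∈ μ := mem_iff_lt_rowLen.2 (by omega)
    have h₁ : (i, s + 1) ∈ μ := mem_iff_lt_rowLen.2 hlt
    have hb₀ : (i + 1, s) ∉ μ := by rw [mem_iff_lt_rowLen]; omega
    have hb₁ : (i + 1, s + 1) ∉ μ := by rw [mem_iff_lt_rowLen]; omega
    refine absurd ?_ (hμ.hookLength_ne_add_one h₁ h₀)
    rw [hookLength_of_not_mem_below h₀ hb₀, hookLength_of_not_mem_below h₁ hb₁]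
    omega
  · exact heq
  · set r := μ.rowLen i
    have h₀ : (i, r - 1) ∈ μ := mem_iff_lt_rowLen.2 (by omega)
    have h₁ : (i + 1, r - 1) ∈ μ := mem_iff_lt_rowLen.2 (by omega)
    have hr₀ : (i, r - 1 + 1) ∉ μ := by rw [mem_iff_lt_rowLen]; omega
    have hr₁ : (i + 1, r - 1 + 1) ∉ μ := by rw [mem_iff_lt_rowLen]; omega
    have hcol := mem_iff_lt_colLen.1 h₁
    refine absurd ?_ (hμ.hookLength_ne_add_one h₁ h₀)
    rw [hookLength_of_not_mem_right h₀ hr₀, hookLength_of_not_mem_right h₁ hr₁]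
    omega

theorem IsCore.rowLen_eq_sub (hμ : μ.IsCore 2) (i : ℕ) : μ.rowLen i = μ.rowLen 0 - i := by
  induction i with
  | zero => rfl
  | succ i ih =>
    rcases Nat.eq_zero_or_pos (μ.rowLen i) with h0 | hpos
    · have := μ.rowLen_anti i (i + 1) i.le_succ
      omega
    · have := hμ.rowLen_succ_add_one hpos
      omega

theorem IsCore.eq_staircase (hμ : μ.IsCore 2) : μ = staircase (μ.rowLen 0) := by
  ext ⟨i, j⟩
  rw [mem_cells, mem_cells, mem_staircase, mem_iff_lt_rowLen, hμ.rowLen_eq_sub i]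
  omega

theorem setOf_isCore_two_and_isCore_of_odd {b : ℕ} (hb : Odd b) :
    {μ : YoungDiagram | μ.IsCore 2 ∧ μ.IsCore b}
      = ↑((range ((b - 1) / 2 + 1)).map ⟨staircase, staircase_injective⟩) := by
  obtain ⟨c, rfl⟩ := hb
  ext μ
  simp only [Set.mem_ofPred_eq, coe_map, Function.Embedding.coeFn_mk, coe_range,
    Set.mem_image, Set.mem_Iio]
  constructor
  · rintro ⟨h2, hb'⟩
    rw [h2.eq_staircase, staircase_isCore_iff ⟨c, rfl⟩] at hb'
    exact ⟨_, by omega, h2.eq_staircase.symm⟩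
  · rintro ⟨k, hk, rfl⟩
    exact ⟨staircase_isCore_two k, (staircase_isCore_iff ⟨c, rfl⟩ k).2 (by omega)⟩

end YoungDiagram

theorem sum_range_cast_choose_two (c : ℕ) :
    ∑ i ∈ Finset.range (c + 1), (((i + 1).choose 2 : ℕ) : ℚ) = c * (c + 1) * (c + 2) / 6 := by
  induction c with
  | zero => simp
  | succ c ih =>
    rw [Finset.sum_range_succ, ih, Nat.cast_choose_two]
    push_cast
    ring

/-- For odd `b`, there are `(b+1)/2` simultaneous `(2,b)`-cores, the sum of their
sizes equals `∑_{i=0}^{(b-1)/2} C(i+1,2)`, which equals `(b-1)(b+1)(b+3)/48`. -/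
theorem two_b_cores (b : ℕ) (hb : Odd b) :
    Nat.card {μ : YoungDiagram | μ.IsCore 2 ∧ μ.IsCore b} = (b + 1) / 2 ∧
    (∑ᶠ μ ∈ {μ : YoungDiagram | μ.IsCore 2 ∧ μ.IsCore b}, (μ.card : ℚ))
      = ∑ i ∈ Finset.range ((b - 1) / 2 + 1), (((i + 1).choose 2 : ℕ) : ℚ) ∧
    (∑ i ∈ Finset.range ((b - 1) / 2 + 1), (((i + 1).choose 2 : ℕ) : ℚ))
      = ((b : ℚ) - 1) * ((b : ℚ) + 1) * ((b : ℚ) + 3) / 48 := by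
  rw [YoungDiagram.setOf_isCore_two_and_isCore_of_odd hb]
  obtain ⟨c, rfl⟩ := hb
  refine ⟨?_, ?_, ?_⟩
  · rw [Nat.card_coe_set_eq, Set.ncard_coe_finset, Finset.card_map, Finset.card_range]
    omega
  · simp only [finsum_mem_coe_finset, Finset.sum_map, Function.Embedding.coeFn_mk,
      YoungDiagram.card_staircase]
  · rw [show (2 * c + 1 - 1) / 2 = c by omega, sum_range_cast_choose_two]
    push_cast
    ring
end
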